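/- For every real number ε > 0, the periodic schedule |121211212123| (i.e., S(t) = 1 if t ≡ 0, 2, 4, 5, 7, 9 (mod 12), S(t) = 2 if t ≡ 1, 3, 6, 8, 10 (mod 12), and S(t) = 3 if t ≡ 11 (mod 12)) is valid for the real-valued pinwheel instance (2 + ε, 12/5, 12). -/

import Mathlib

/-- A schedule `S : ℤ → Fin k` is valid for the real-valued pinwheel instance
`a : Fin k → ℝ` if for every task `i`, every positive integer `l`, and every
integer `m`, task `i` is performed at least `l` times on the days
`t ∈ [m, m + ⌈l * a i⌉)`. -/
def PinValid {k : ℕ} (a : Fin k → ℝ) (S : ℤ → Fin k) : Prop :=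
  ∀ i : Fin k, ∀ l : ℕ, 0 < l → ∀ m : ℤ,
    (l : ℕ) ≤ ((Finset.Ico m (m + ⌈(l : ℝ) * a i⌉)).filter (fun t => S t = i)).card

/-- A real-valued pinwheel instance is schedulable if some schedule is valid for it. -/
def PinSchedulable {k : ℕ} (a : Fin k → ℝ) : Prop := ∃ S : ℤ → Fin k, PinValid a S

/-- The periodic schedule `|121211212123|`. -/
def S121211212123 : ℤ → Fin 3 := fun t =>
  if t % 12 = 11 then 2
  else if t % 12 = 1 ∨ t % 12 = 3 ∨ t % 12 = 6 ∨ t % 12 = 8 ∨ t % 12 = 10 then 1 else 0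

/-- The number of days in the window `[m, m + w)` on which task `i` is performed. -/
noncomputable def C (i : Fin 3) (m w : ℤ) : ℕ :=
  ((Finset.Ico m (m + w)).filter (fun t => S121211212123 t = i)).card

lemma S_per (t : ℤ) : S121211212123 (t + 12) = S121211212123 t := by
  have h : (t + 12) % 12 = t % 12 := by omega
  simp only [S121211212123, h]

lemma C_shift (i : Fin 3) (m w : ℤ) : C i (m + 12) w = C i m w := by
  unfold C
  refine Finset.card_bij' (fun t _ => t - 12) (fun t _ => t + 12) ?_ ?_ ?_ ?_
  · intro a ha
    simp only [Finset.mem_filter, Finset.mem_Ico] at ha ⊢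
    obtain ⟨⟨h1, h2⟩, h3⟩ := ha
    refine ⟨⟨by omega, by omega⟩, ?_⟩
    rw [show a = (a - 12) + 12 by ring, S_per] at h3
    exact h3
  · intro a ha
    simp only [Finset.mem_filter, Finset.mem_Ico] at ha ⊢
    obtain ⟨⟨h1, h2⟩, h3⟩ := ha
    exact ⟨⟨by omega, by omega⟩, by rw [S_per]; exact h3⟩
  · intro a _; ring
  · intro a _; ring

lemma C_shift_mul (i : Fin 3) (m w : ℤ) (j : ℤ) : C i (m + 12 * j) w = C i m w := by
  induction j using Int.induction_on with
  | zero => simp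
  | succ n ih =>
    have h : m + 12 * ((n : ℤ) + 1) = (m + 12 * n) + 12 := by ring
    rw [h, C_shift, ih]
  | pred n ih =>
    have h2 : (m + 12 * (-(n : ℤ) - 1)) + 12 = m + 12 * (-(n:ℤ)) := by ring
    rw [← ih, ← h2, C_shift]

lemma C_mod (i : Fin 3) (m w : ℤ) : C i m w = C i (m % 12) w := by
  have h := C_shift_mul i (m % 12) w (m / 12)
  rw [show m % 12 + 12 * (m / 12) = m by omega] at h
  exact h

lemma C_split (i : Fin 3) (m w1 w2 : ℤ) (h1 : 0 ≤ w1) (h2 : 0 ≤ w2) :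
    C i m (w1 + w2) = C i m w1 + C i (m + w1) w2 := by
  unfold C
  rw [show m + (w1 + w2) = (m + w1) + w2 by ring,
    ← Finset.Ico_union_Ico_eq_Ico (by omega : m ≤ m + w1) (by omega : m + w1 ≤ m + w1 + w2),
    Finset.filter_union,
    Finset.card_union_of_disjoint
      (Finset.disjoint_filter_filter (Finset.Ico_disjoint_Ico_consecutive m (m + w1) (m + w1 + w2)))]

lemma C_mono (i : Fin 3) (m w1 w2 : ℤ) (h : w1 ≤ w2) : C i m w1 ≤ C i m w2 :=
  Finset.card_le_card (Finset.filter_subset_filter _ (Finset.Ico_subset_Ico_right (by omega)))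

lemma C_period : ∀ m0 ∈ Finset.Ico (0:ℤ) 12, ∀ i : Fin 3, C i m0 12 = ![6, 5, 1] i := by decide

lemma hmem12 : ∀ x : ℤ, x % 12 ∈ Finset.Ico (0:ℤ) 12 := by
  intro x; simp only [Finset.mem_Ico]; omega

lemma C_block (i : Fin 3) (q : ℕ) : ∀ m' : ℤ, C i m' (12 * (q : ℤ)) = ![6, 5, 1] i * q := by
  induction q with
  | zero => intro m'; simp [C]
  | succ n ih =>
    intro m'
    rw [show (12 * ((n + 1 : ℕ) : ℤ)) = 12 + 12 * (n : ℤ) by push_cast; ring,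
      C_split i m' 12 (12 * (n : ℤ)) (by norm_num) (by positivity), ih]
    have hp : C i m' 12 = ![6, 5, 1] i := by
      rw [C_mod]; exact C_period _ (hmem12 m') i
    rw [hp]; ring

lemma key (i : Fin 3) (q r : ℕ) (b : ℤ) (hb : 0 ≤ b)
    (hbase : ∀ m0 ∈ Finset.Ico (0:ℤ) 12, r ≤ C i m0 b)
    (m w : ℤ) (hw : 12 * (q : ℤ) + b ≤ w) :
    ![6, 5, 1] i * q + r ≤ C i m w := by
  have h1 := C_block i q
  calc ![6, 5, 1] i * q + r ≤ C i m (12 * (q : ℤ)) + C i (m + 12 * (q : ℤ)) b := by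
        rw [h1]
        have : r ≤ C i (m + 12 * (q : ℤ)) b := by
          rw [C_mod]; exact hbase _ (hmem12 _)
        omega
    _ = C i m (12 * (q : ℤ) + b) := (C_split i m _ b (by positivity) hb).symm
    _ ≤ C i m w := C_mono i m _ w hw

lemma base0 : ∀ r : ℕ, r < 6 → ∀ m0 ∈ Finset.Ico (0:ℤ) 12, r ≤ C 0 m0 (2 * (r : ℤ) + 1) := by
  decide

lemma base1 : ∀ r : ℕ, r < 5 → ∀ m0 ∈ Finset.Ico (0:ℤ) 12, r ≤ C 1 m0 ((12 * (r : ℤ) + 4) / 5) := by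
  decide

theorem valid_121211212123 (ε : ℝ) (hε : 0 < ε) :
    PinValid ![(2 : ℝ) + ε, 12 / 5, 12] S121211212123 := by
  intro i l hl m
  fin_cases i
  · -- task 0 : a = 2 + ε
    show l ≤ C 0 m ⌈(l : ℝ) * ((2 : ℝ) + ε)⌉
    set q := l / 6 with hq
    set r := l % 6 with hr
    have hqr : l = 6 * q + r := (Nat.div_add_mod l 6).symm
    have hlr : ((l : ℝ)) = 6 * (q : ℝ) + (r : ℝ) := by exact_mod_cast congrArg (Nat.cast (R := ℝ)) hqr
    have hw : 12 * (q : ℤ) + (2 * (r : ℤ) + 1) ≤ ⌈(l : ℝ) * ((2 : ℝ) + ε)⌉ := by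
      have hlt : (12 * (q : ℤ) + 2 * (r : ℤ) : ℤ) < ⌈(l : ℝ) * ((2 : ℝ) + ε)⌉ := by
        rw [Int.lt_ceil]
        have hl1 : (1 : ℝ) ≤ (l : ℝ) := by exact_mod_cast hl
        have hpos : (0 : ℝ) < (l : ℝ) * ε := mul_pos (by linarith) hε
        push_cast
        nlinarith
      omega
    have h := key 0 q r (2 * (r : ℤ) + 1) (by positivity)
      (base0 r (Nat.mod_lt _ (by norm_num))) m _ hw
    have : ![6, 5, 1] 0 * q + r = l := by simp [hqr]
    omega
  · -- task 1 : a = 12/5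
    show l ≤ C 1 m ⌈(l : ℝ) * ((12 : ℝ) / 5)⌉
    set q := l / 5 with hq
    set r := l % 5 with hr
    set b : ℤ := (12 * (r : ℤ) + 4) / 5 with hb
    have hqr : l = 5 * q + r := (Nat.div_add_mod l 5).symm
    have hlr : ((l : ℝ)) = 5 * (q : ℝ) + (r : ℝ) := by exact_mod_cast congrArg (Nat.cast (R := ℝ)) hqr
    have hb5 : 5 * b ≤ 12 * (r : ℤ) + 4 ∧ 0 ≤ b := by constructor <;> omega
    have hw : 12 * (q : ℤ) + b ≤ ⌈(l : ℝ) * ((12 : ℝ) / 5)⌉ := by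
      have hlt : (12 * (q : ℤ) + b - 1 : ℤ) < ⌈(l : ℝ) * ((12 : ℝ) / 5)⌉ := by
        rw [Int.lt_ceil]
        have h5 : ((5 : ℝ) * (b : ℝ)) ≤ 12 * (r : ℝ) + 4 := by exact_mod_cast hb5.1
        push_cast
        nlinarith
      omega
    have h := key 1 q r b hb5.2 (base1 r (Nat.mod_lt _ (by norm_num))) m _ hw
    have : ![6, 5, 1] 1 * q + r = l := by simp [hqr]
    omega
  · -- task 2 : a = 12
    show l ≤ C 2 m ⌈(l : ℝ) * (12 : ℝ)⌉
    have hw : 12 * (l : ℤ) + 0 ≤ ⌈(l : ℝ) * (12 : ℝ)⌉ := by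
      have hlt : (12 * (l : ℤ) - 1 : ℤ) < ⌈(l : ℝ) * (12 : ℝ)⌉ := by
        rw [Int.lt_ceil]; push_cast; linarith
      omega
    have h := key 2 l 0 0 le_rfl (by intro m0 _; exact Nat.zero_le _) m _ hw
    have : ![6, 5, 1] 2 * l + 0 = l := by simp
    omega
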